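/- Let V be a 2n×2n real positive definite matrix and Ω the standard symplectic form. Then V satisfies V + iΩ ≥ 0 (as a complex Hermitian matrix) if and only if V ≥ V # (Ωᵀ V⁻¹ Ω) in the Löwner order. -/

import Mathlib

open Matrix
open scoped ComplexOrder

/-- Total matrix square root: the PSD square root on PSD matrices, `0` elsewhere. -/
noncomputable def msqrt {𝕜 : Type*} [RCLike 𝕜] {n : Type*} [Fintype n] [DecidableEq n]
    (A : Matrix n n 𝕜) : Matrix n n 𝕜 :=
  letI := Classical.dec A.PosSemidef
  if h : A.PosSemidef then
    h.1.eigenvectorUnitary.1 * diagonal ((↑) ∘ (Real.sqrt ∘ h.1.eigenvalues)) *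
      (star h.1.eigenvectorUnitary : Matrix n n 𝕜)
  else 0

/-- The matrix geometric mean `A # B = A^{1/2} (A^{-1/2} B A^{-1/2})^{1/2} A^{1/2}`. -/
noncomputable def geomMean {𝕜 : Type*} [RCLike 𝕜] {n : Type*} [Fintype n] [DecidableEq n]
    (A B : Matrix n n 𝕜) : Matrix n n 𝕜 :=
  msqrt A * msqrt ((msqrt A)⁻¹ * B * (msqrt A)⁻¹) * msqrt A

/-- The standard symplectic form `Ω = [[0, I],[-I, 0]]` in position-momentum ordering. -/
def symForm (n : ℕ) : Matrix (Fin n ⊕ Fin n) (Fin n ⊕ Fin n) ℝ :=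
  Matrix.fromBlocks 0 1 (-1) 0

/-! With `T = V^{1/2}` and `W = T⁻¹ Ω T⁻¹`, which is again real antisymmetric, one has
`V + iΩ = T (1 + iW) T` and `Ωᵀ V⁻¹ Ω = T (WᵀW) T`. Since `1 - iW = (1 + iW)ᵀ`, the matrix
`1 + iW` is positive semidefinite iff `-1 ≤ iW ≤ 1`, i.e. iff `(iW)² = WᵀW ≤ 1`; hence
`V + iΩ ≥ 0 ↔ Ωᵀ V⁻¹ Ω ≤ V`. Finally `A # B ≤ A ↔ B ≤ A` for `A > 0`, `B ≥ 0`: conjugating by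
`A^{-1/2}` turns it into `P^{1/2} ≤ 1 ↔ P ≤ 1`. -/

open scoped MatrixOrder

namespace IsSelfAdjoint

variable {R : Type*} [Ring R] [PartialOrder R] [StarRing R] [StarOrderedRing R] {a b c : R}

lemma conjugate_nonneg_iff (hc : IsSelfAdjoint c) (hc' : IsUnit c) :
    0 ≤ c * a * c ↔ 0 ≤ a := by
  simpa only [hc.star_eq] using hc'.star_left_conjugate_nonneg_iff (x := a)

lemma conjugate_le_conjugate_iff (hc : IsSelfAdjoint c) (hc' : IsUnit c) :
    c * a * c ≤ c * b * c ↔ a ≤ b := by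
  rw [← sub_nonneg, ← sub_mul, ← mul_sub, hc.conjugate_nonneg_iff hc', sub_nonneg]

end IsSelfAdjoint

namespace CFC

variable {A : Type*} [PartialOrder A] [Ring A] [StarRing A] [TopologicalSpace A]
  [StarOrderedRing A] [Algebra ℝ A] [ContinuousFunctionalCalculus ℝ A IsSelfAdjoint]
  [NonnegSpectrumClass ℝ A]

lemma sqrt_le_one_iff [IsSemitopologicalRing A] [T2Space A] (a : A) (ha : 0 ≤ a := by cfc_tac) :
    sqrt a ≤ 1 ↔ a ≤ 1 := by
  rw [sqrt_eq_real_sqrt a, cfcₙ_eq_cfc, cfc_le_one_iff Real.sqrt a, le_one_iff (R := ℝ) a]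
  simp only [Real.sqrt_le_one]

lemma mul_self_le_one_iff (a : A) (ha : IsSelfAdjoint a := by cfc_tac) :
    a * a ≤ 1 ↔ -1 ≤ a ∧ a ≤ 1 := by
  have hneg : (-1 : A) = algebraMap ℝ A (-1) := by simp
  calc a * a ≤ 1 ↔ cfc (fun x : ℝ => x * x) a ≤ 1 := by
        rw [cfc_mul (fun x => x) (fun x => x) a, cfc_id' ℝ a]
    _ ↔ ∀ x ∈ spectrum ℝ a, x * x ≤ 1 := cfc_le_one_iff _ a
    _ ↔ ∀ x ∈ spectrum ℝ a, -1 ≤ x ∧ x ≤ 1 := by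
      simp only [← sq, sq_le_one_iff_abs_le_one, abs_le]
    _ ↔ -1 ≤ a ∧ a ≤ 1 := by
      rw [forall₂_and, hneg, algebraMap_le_iff_le_spectrum, le_one_iff (R := ℝ) a]

end CFC

section GeomMean

variable {𝕜 : Type*} [RCLike 𝕜] {m : Type*} [Fintype m] [DecidableEq m]

lemma msqrt_eq_sqrt {A : Matrix m m 𝕜} (hA : A.PosSemidef) : msqrt A = CFC.sqrt A := by
  rw [CFC.sqrt_eq_real_sqrt A hA.nonneg, cfcₙ_eq_cfc, hA.isHermitian.cfc_eq, msqrt, dif_pos hA]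
  rfl

lemma geomMean_le_left_iff {A B : Matrix m m 𝕜} (hA : A.PosDef) (hB : B.PosSemidef) :
    geomMean A B ≤ A ↔ B ≤ A := by
  set T := CFC.sqrt A
  have hT : IsSelfAdjoint T := (CFC.sqrt_nonneg A).isSelfAdjoint
  have hTu : IsUnit T := (CFC.isUnit_sqrt_iff A hA.posSemidef.nonneg).2 hA.isUnit
  have hTdet : IsUnit T.det := (Matrix.isUnit_iff_isUnit_det T).mp hTu
  set P := T⁻¹ * B * T⁻¹
  have hP : P.PosSemidef := by
    have hTH : Tᴴ = T := hT
    simpa [conjTranspose_nonsing_inv, hTH] using hB.mul_mul_conjTranspose_same T⁻¹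
  have hBP : B = T * P * T := by
    simp only [P, Matrix.mul_assoc, mul_nonsing_inv_cancel_left _ _ hTdet, nonsing_inv_mul T hTdet,
      Matrix.mul_one]
  have hA1 : A = T * 1 * T := by rw [Matrix.mul_one, CFC.sqrt_mul_sqrt_self A hA.posSemidef.nonneg]
  have hmean : geomMean A B = T * CFC.sqrt P * T := by
    rw [geomMean, msqrt_eq_sqrt hA.posSemidef, msqrt_eq_sqrt hP]
  calc geomMean A B ≤ A ↔ CFC.sqrt P ≤ 1 := by
        rw [hmean, hA1, hT.conjugate_le_conjugate_iff hTu]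
    _ ↔ P ≤ 1 := CFC.sqrt_le_one_iff P hP.nonneg
    _ ↔ B ≤ A := by rw [hBP, hA1, hT.conjugate_le_conjugate_iff hTu]

end GeomMean

section Complexification

variable {m : Type*} [Fintype m]

omit [Fintype m] in
lemma conjTranspose_map_ofReal (M : Matrix m m ℝ) :
    (M.map Complex.ofReal)ᴴ = Mᵀ.map Complex.ofReal := by
  rw [← conjTranspose_eq_transpose_of_trivial,
    conjTranspose_map _ fun x => (Complex.conj_ofReal x).symm]

lemma map_ofReal_mul (M N : Matrix m m ℝ) :
    (M * N).map Complex.ofReal = M.map Complex.ofReal * N.map Complex.ofReal :=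
  Matrix.map_mul (f := Complex.ofRealHom)

lemma posSemidef_map_ofReal_iff [DecidableEq m] {B : Matrix m m ℝ} :
    (B.map Complex.ofReal).PosSemidef ↔ B.PosSemidef := by
  refine ⟨fun h => .of_dotProduct_mulVec_nonneg ?_ fun x => ?_, fun h => ?_⟩
  · exact (isHermitian_map_iff (fun x => (Complex.conj_ofReal x).symm)
      Complex.ofReal_injective).1 h.isHermitian
  · have hx := h.dotProduct_mulVec_nonneg (Complex.ofRealHom ∘ x)
    have hform : star (Complex.ofRealHom ∘ x) ⬝ᵥ (B.map Complex.ofReal *ᵥ (Complex.ofRealHom ∘ x))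
        = ((star x ⬝ᵥ (B *ᵥ x) : ℝ) : ℂ) := by
      rw [← Complex.ofRealHom_eq_coe, RingHom.map_dotProduct]
      congr 1
      · ext i; simp
      · ext i; exact (RingHom.map_mulVec Complex.ofRealHom B x i).symm
    rwa [hform, Complex.zero_le_real] at hx
  · set S := CFC.sqrt B
    have hS : Sᵀ = S := by
      rw [← conjTranspose_eq_transpose_of_trivial]; exact (CFC.sqrt_nonneg B).isSelfAdjoint
    have hB : B = Sᵀ * S := by rw [hS, CFC.sqrt_mul_sqrt_self B h.nonneg]
    rw [hB, map_ofReal_mul, ← conjTranspose_map_ofReal]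
    exact posSemidef_conjTranspose_mul_self _

lemma posSemidef_one_add_I_smul_iff [DecidableEq m] {W : Matrix m m ℝ} (hW : Wᵀ = -W) :
    (1 + Complex.I • W.map Complex.ofReal).PosSemidef ↔ Wᵀ * W ≤ 1 := by
  set A := Complex.I • W.map Complex.ofReal
  have hWc : Wᵀ.map Complex.ofReal = -W.map Complex.ofReal := by
    rw [hW, Matrix.map_neg _ Complex.ofReal_neg]
  have hA : IsSelfAdjoint A := by
    change Aᴴ = A
    rw [conjTranspose_smul, conjTranspose_map_ofReal, hWc, Complex.star_def, Complex.conj_I,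
      smul_neg, neg_smul, neg_neg]
  have hAt : (1 + A)ᵀ = 1 - A := by
    rw [transpose_add, transpose_one, transpose_smul, ← transpose_map, hWc, smul_neg,
      ← sub_eq_add_neg]
  have hAA : A * A = (Wᵀ * W).map Complex.ofReal := by
    rw [map_ofReal_mul, hWc, smul_mul_smul_comm, Complex.I_mul_I, neg_mul, neg_one_smul]
  calc (1 + A).PosSemidef ↔ -1 ≤ A ∧ A ≤ 1 := by
        rw [Matrix.le_iff, Matrix.le_iff, sub_neg_eq_add, add_comm A 1, ← hAt,
          posSemidef_transpose_iff, and_self]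
    _ ↔ A * A ≤ 1 := (CFC.mul_self_le_one_iff A).symm
    _ ↔ Wᵀ * W ≤ 1 := by
        rw [Matrix.le_iff, Matrix.le_iff, hAA, ← posSemidef_map_ofReal_iff,
          Matrix.map_sub _ Complex.ofReal_sub, Matrix.map_one _ Complex.ofReal_zero Complex.ofReal_one]

end Complexification

lemma posSemidef_add_I_smul_iff {m : Type*} [Fintype m] [DecidableEq m] {V Ω : Matrix m m ℝ}
    (hV : V.PosDef) (hΩ : Ωᵀ = -Ω) :
    (V.map Complex.ofReal + Complex.I • Ω.map Complex.ofReal).PosSemidef ↔ Ωᵀ * V⁻¹ * Ω ≤ V := by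
  set T := CFC.sqrt V
  have hT : IsSelfAdjoint T := (CFC.sqrt_nonneg V).isSelfAdjoint
  have hTt : Tᵀ = T := by rw [← conjTranspose_eq_transpose_of_trivial]; exact hT
  have hTu : IsUnit T := (CFC.isUnit_sqrt_iff V hV.posSemidef.nonneg).2 hV.isUnit
  have hTdet : IsUnit T.det := (Matrix.isUnit_iff_isUnit_det T).mp hTu
  have hTT : T * T = V := CFC.sqrt_mul_sqrt_self V hV.posSemidef.nonneg
  have hV1 : V = T * 1 * T := by rw [Matrix.mul_one, hTT]
  set W := T⁻¹ * Ω * T⁻¹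
  have hΩW : Ω = T * W * T := by
    simp only [W, Matrix.mul_assoc, mul_nonsing_inv_cancel_left _ _ hTdet, nonsing_inv_mul T hTdet,
      Matrix.mul_one]
  have hW : Wᵀ = -W := by
    simp only [W, transpose_mul, transpose_nonsing_inv, hTt, hΩ, Matrix.mul_neg, Matrix.neg_mul,
      Matrix.mul_assoc]
  have hrhs : Ωᵀ * V⁻¹ * Ω = T * (Wᵀ * W) * T := by
    rw [hΩW, ← hTT, Matrix.mul_inv_rev, transpose_mul, transpose_mul, hTt]
    simp only [Matrix.mul_assoc, mul_nonsing_inv_cancel_left _ _ hTdet,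
      nonsing_inv_mul_cancel_left _ _ hTdet]
  have hlhs : V.map Complex.ofReal + Complex.I • Ω.map Complex.ofReal
      = T.map Complex.ofReal * (1 + Complex.I • W.map Complex.ofReal) * T.map Complex.ofReal := by
    rw [← hTT, hΩW]
    simp only [map_ofReal_mul, Matrix.mul_add, Matrix.add_mul, Matrix.mul_smul, Matrix.smul_mul,
      Matrix.mul_one]
  have hTc : IsSelfAdjoint (T.map Complex.ofReal) := by
    rw [IsSelfAdjoint, star_eq_conjTranspose, conjTranspose_map_ofReal, hTt]
  have hTcu : IsUnit (T.map Complex.ofReal) := hTu.map Complex.ofRealHom.mapMatrix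
  rw [hlhs, ← nonneg_iff_posSemidef, hTc.conjugate_nonneg_iff hTcu, nonneg_iff_posSemidef,
    posSemidef_one_add_I_smul_iff hW, hrhs, hV1, hT.conjugate_le_conjugate_iff hTu]

/-- A real positive definite `V` satisfies the uncertainty relation `V + iΩ ≥ 0` iff
`V ≥ V # (Ωᵀ V⁻¹ Ω)` in the Löwner order. -/
theorem uncertainty_iff_geomMean (n : ℕ)
    (V : Matrix (Fin n ⊕ Fin n) (Fin n ⊕ Fin n) ℝ) (hV : V.PosDef) :
    (V.map Complex.ofReal + Complex.I • (symForm n).map Complex.ofReal).PosSemidef ↔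
      (V - geomMean V ((symForm n)ᵀ * V⁻¹ * symForm n)).PosSemidef := by
  have hΩ : (symForm n)ᵀ = -symForm n := by
    simp [symForm, fromBlocks_transpose, fromBlocks_neg]
  have hB : ((symForm n)ᵀ * V⁻¹ * symForm n).PosSemidef := by
    simpa only [conjTranspose_eq_transpose_of_trivial]
      using hV.inv.posSemidef.conjTranspose_mul_mul_same (symForm n)
  rw [← Matrix.le_iff, geomMean_le_left_iff hV hB]
  exact posSemidef_add_I_smul_iff hV hΩ
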